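/- Let λ ∈ ℂ with λ ≠ 0 and λ ≠ 1. Then there exists ρ > 0 such that the power series ∑_{n≥0} B_n(λ)·t^n/n! converges absolutely for every complex t with |t| < ρ, and for every such t one has (λ·e^t − 1)·∑_{n≥0} B_n(λ)·t^n/n! = Log λ + t; that is, ∑_{n≥0} B_n(λ)·t^n/n! = (Log λ + t)/(λ e^t − 1) near t = 0. -/

import Mathlib

/-- The λ-Bernoulli numbers `B_n(λ)`, defined by `B_0(λ) = Log λ / (λ - 1)` and, for `n ≥ 1`,
by the recurrence `λ·∑_{k=0}^{n} C(n,k)·B_k(λ) - B_n(λ) = (1 if n = 1, 0 if n ≥ 2)`,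
encoding the generating function `(Log λ + t)/(λ e^t - 1) = ∑ B_n(λ) t^n/n!`. -/
noncomputable def lambdaBernoulli (lam : ℂ) : ℕ → ℂ
  | 0 => Complex.log lam / (lam - 1)
  | n + 1 =>
      ((if n = 0 then (1 : ℂ) else 0) -
        lam * ∑ k : Fin (n + 1), ((n + 1).choose (k : ℕ) : ℂ) * lambdaBernoulli lam k) / (lam - 1)

/-! With `b n = B_n(λ) / n!`, the recurrence (together with the value of `B_0`) says that
`λ ∑_{k ≤ n} b_k / (n - k)! - b_n` is `Log λ, 1, 0, 0, …`: this is the coefficientwise form of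
`(λ e^t - 1) ∑ b_n t^n = Log λ + t`, the product `e^t ∑ b_n t^n` being a Cauchy product.
Solving the recurrence for `b_{n+1}` gives `|b_{n+1}| ≤ (1 + |λ| ∑_{k ≤ n} |b_k|) / |λ - 1|`,
so `b_n` grows at most geometrically and the series converges absolutely near `0`, which
justifies the Cauchy product. -/

open Finset
open scoped Nat

theorem le_mul_pow_of_le_add_mul_sum {a : ℕ → ℝ} {A B : ℝ} (hA : 0 ≤ A) (hB : 0 ≤ B)
    (ha₀ : 0 ≤ a 0) (h : ∀ n, a (n + 1) ≤ A + B * ∑ k ∈ range (n + 1), a k) (n : ℕ) :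
    a n ≤ (A + a 0) * (1 + B) ^ n := by
  have hsum : ∀ n, A + B * ∑ k ∈ range (n + 1), a k ≤ (A + B * a 0) * (1 + B) ^ n := by
    intro n
    induction n with
    | zero => simp
    | succ n ih =>
      rw [sum_range_succ, pow_succ]
      nlinarith [mul_le_mul_of_nonneg_left (h n) hB]
  cases n with
  | zero => simpa using hA
  | succ n =>
    refine (h n).trans ((hsum n).trans ?_)
    rw [pow_succ, mul_comm _ (1 + B), ← mul_assoc]
    gcongr
    nlinarith [mul_nonneg hA hB]

theorem hasSum_exp_mul_tsum {b : ℕ → ℂ} {t : ℂ} (hb : Summable fun n => ‖b n * t ^ n‖) :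
    HasSum (fun n => (∑ k ∈ range (n + 1), b k / (n - k)!) * t ^ n)
      (Complex.exp t * ∑' n, b n * t ^ n) := by
  have hexp : Summable fun n => ‖t ^ n / (n ! : ℂ)‖ := NormedSpace.norm_expSeries_div_summable t
  have hterm : (fun n => ∑ k ∈ range (n + 1), b k * t ^ k * (t ^ (n - k) / (n - k)!)) =
      fun n => (∑ k ∈ range (n + 1), b k / (n - k)!) * t ^ n := by
    funext n
    rw [sum_mul]
    refine sum_congr rfl fun k hk => ?_
    rw [← pow_mul_pow_sub t (mem_range_succ_iff.mp hk)]
    ring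
  rw [mul_comm, Complex.exp_eq_exp_ℂ, NormedSpace.exp_eq_tsum_div,
    tsum_mul_tsum_eq_tsum_sum_range_of_summable_norm hb hexp, ← hterm]
  exact (summable_norm_sum_mul_range_of_summable_norm hb hexp).of_norm.hasSum

variable {lam : ℂ}

theorem lambdaBernoulli_recurrence (h1 : lam ≠ 1) (n : ℕ) :
    lam * ∑ k ∈ range (n + 1), (n.choose k : ℂ) * lambdaBernoulli lam k
        - lambdaBernoulli lam n =
      if n = 0 then Complex.log lam else if n = 1 then 1 else 0 := by
  have hd : lam - 1 ≠ 0 := sub_ne_zero.mpr h1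
  cases n with
  | zero =>
    simp only [zero_add, range_one, sum_singleton, Nat.choose_self, Nat.cast_one, one_mul,
      lambdaBernoulli, if_pos]
    field_simp
  | succ n =>
    rw [sum_range_succ, Nat.choose_self, lambdaBernoulli, Fin.sum_univ_eq_sum_range
      (fun k => ((n + 1).choose k : ℂ) * lambdaBernoulli lam k)]
    field_simp
    simp only [Nat.add_eq_zero_iff, one_ne_zero, and_false, if_false, Nat.add_eq_right]
    push_cast
    ring

theorem lambdaBernoulli_div_factorial_recurrence (h1 : lam ≠ 1) (n : ℕ) :
    lam * ∑ k ∈ range (n + 1), lambdaBernoulli lam k / k ! / (n - k)!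
        - lambdaBernoulli lam n / n ! =
      if n = 0 then Complex.log lam else if n = 1 then 1 else 0 := by
  have hfac : (n ! : ℂ) ≠ 0 := by exact_mod_cast n.factorial_ne_zero
  have hchoose : ∀ k ∈ range (n + 1), (n.choose k : ℂ) * lambdaBernoulli lam k =
      n ! * (lambdaBernoulli lam k / k ! / (n - k)!) := by
    intro k hk
    rw [Nat.cast_choose ℂ (mem_range_succ_iff.mp hk)]
    field_simp
  have hrhs : (n ! : ℂ) * (if n = 0 then Complex.log lam else if n = 1 then 1 else 0) =
      if n = 0 then Complex.log lam else if n = 1 then 1 else 0 := by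
    rcases n with _ | _ | n <;> simp
  apply mul_left_cancel₀ hfac
  rw [hrhs, ← lambdaBernoulli_recurrence h1 n, sum_congr rfl hchoose, ← mul_sum]
  field_simp

theorem norm_lambdaBernoulli_div_factorial_succ_le (h1 : lam ≠ 1) (n : ℕ) :
    ‖lambdaBernoulli lam (n + 1) / (n + 1)!‖ ≤
      1 / ‖lam - 1‖ +
        ‖lam‖ / ‖lam - 1‖ * ∑ k ∈ range (n + 1), ‖lambdaBernoulli lam k / (k ! : ℂ)‖ := by
  have hd : 0 < ‖lam - 1‖ := norm_pos_iff.mpr (sub_ne_zero.mpr h1)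
  have hrec := lambdaBernoulli_div_factorial_recurrence h1 (n + 1)
  rw [sum_range_succ, Nat.sub_self, Nat.factorial_zero, Nat.cast_one, div_one,
    if_neg n.succ_ne_zero] at hrec
  have hsplit : (lam - 1) * (lambdaBernoulli lam (n + 1) / (n + 1)!) =
      (if n + 1 = 1 then 1 else 0) -
        lam * ∑ k ∈ range (n + 1), lambdaBernoulli lam k / k ! / (n + 1 - k)! := by
    linear_combination hrec
  have hterm : ∀ k ∈ range (n + 1), ‖lambdaBernoulli lam k / k ! / (n + 1 - k)!‖ ≤
      ‖lambdaBernoulli lam k / (k ! : ℂ)‖ := by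
    intro k _
    rw [norm_div, Complex.norm_natCast]
    exact div_le_self (norm_nonneg _) (by exact_mod_cast (n + 1 - k).factorial_pos)
  have hite : ‖(if n + 1 = 1 then (1 : ℂ) else 0)‖ ≤ 1 := by split_ifs <;> simp
  rw [div_mul_eq_mul_div, ← add_div, le_div_iff₀ hd, mul_comm, ← norm_mul, hsplit]
  calc _ ≤ ‖(if n + 1 = 1 then (1 : ℂ) else 0)‖ +
        ‖lam‖ * ‖∑ k ∈ range (n + 1), lambdaBernoulli lam k / k ! / (n + 1 - k)!‖ := by
        rw [← norm_mul]; exact norm_sub_le _ _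
    _ ≤ 1 + ‖lam‖ * ∑ k ∈ range (n + 1), ‖lambdaBernoulli lam k / (k ! : ℂ)‖ := by
        gcongr
        exact (norm_sum_le _ _).trans (sum_le_sum hterm)

theorem exists_norm_lambdaBernoulli_div_factorial_le (h1 : lam ≠ 1) :
    ∃ C R : ℝ, 0 < R ∧ ∀ n, ‖lambdaBernoulli lam n / (n ! : ℂ)‖ ≤ C * R ^ n :=
  ⟨_, _, by positivity, le_mul_pow_of_le_add_mul_sum (by positivity) (by positivity)
    (norm_nonneg _) (norm_lambdaBernoulli_div_factorial_succ_le h1)⟩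

theorem lambdaBernoulli_generating_function_general (lam : ℂ) (h1 : lam ≠ 1) :
    ∃ ρ : ℝ, 0 < ρ ∧ ∀ t : ℂ, ‖t‖ < ρ →
      Summable (fun n : ℕ => ‖lambdaBernoulli lam n * t ^ n / (n.factorial : ℂ)‖) ∧
      (lam * Complex.exp t - 1) *
          (∑' n : ℕ, lambdaBernoulli lam n * t ^ n / (n.factorial : ℂ)) =
        Complex.log lam + t := by
  obtain ⟨C, R, hR, hbound⟩ := exists_norm_lambdaBernoulli_div_factorial_le h1
  refine ⟨R⁻¹, inv_pos.mpr hR, fun t ht => ?_⟩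
  simp_rw [mul_div_right_comm _ (t ^ _)]
  have hRt : R * ‖t‖ < 1 := by
    simpa [hR.ne'] using mul_lt_mul_of_pos_left ht hR
  have hsum : Summable fun n => ‖lambdaBernoulli lam n / n ! * t ^ n‖ := by
    refine .of_nonneg_of_le (fun n => norm_nonneg _) (fun n => ?_)
      ((summable_geometric_of_lt_one (by positivity) hRt).mul_left C)
    rw [norm_mul, norm_pow, mul_pow, ← mul_assoc]
    gcongr
    exact hbound n
  refine ⟨hsum, ?_⟩
  have hpoly : HasSum
      (fun n => (if n = 0 then Complex.log lam else if n = 1 then 1 else 0) * t ^ n)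
      (Complex.log lam + t) := by
    have hfin : ∀ n ∉ range 2,
        (if n = 0 then Complex.log lam else if n = 1 then 1 else 0) * t ^ n = 0 := by
      intro n hn
      simp only [mem_range, not_lt] at hn
      simp [show n ≠ 0 by omega, show n ≠ 1 by omega]
    simpa [sum_range_succ] using hasSum_sum_of_ne_finset_zero hfin
  have hseries := ((hasSum_exp_mul_tsum hsum).mul_left lam).sub hsum.of_norm.hasSum
  simp_rw [← mul_assoc, ← sub_mul, lambdaBernoulli_div_factorial_recurrence h1] at hseries
  linear_combination hseries.unique hpoly

/-- for `λ ∈ ℂ`, `λ ≠ 0`, `λ ≠ 1`, there exists `ρ > 0` such that the power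
series `∑_{n≥0} B_n(λ)·t^n/n!` converges absolutely for `|t| < ρ` and satisfies
`(λ·e^t - 1)·∑_{n≥0} B_n(λ)·t^n/n! = Log λ + t` there; i.e. the `B_n(λ)` have generating
function `(Log λ + t)/(λ e^t - 1)` near `t = 0`. -/
theorem lambdaBernoulli_generating_function (lam : ℂ) (h0 : lam ≠ 0) (h1 : lam ≠ 1) :
    ∃ ρ : ℝ, 0 < ρ ∧ ∀ t : ℂ, ‖t‖ < ρ →
      Summable (fun n : ℕ => ‖lambdaBernoulli lam n * t ^ n / (n.factorial : ℂ)‖) ∧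
      (lam * Complex.exp t - 1) *
          (∑' n : ℕ, lambdaBernoulli lam n * t ^ n / (n.factorial : ℂ)) =
        Complex.log lam + t :=
  lambdaBernoulli_generating_function_general lam h1
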